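/- arXiv:2402.05885 — 2 statements merged into one kernel-verified Lean document; each statement's English description precedes it below -/
import Mathlib

section
/- Theorem (GED with node label costs): With A, B adjacency matrices as above, node labels L₁ : Fin n → Σ, L₂ : Fin n → Σ, a node-edit cost function d_v : Σ → Σ → ℝ with d_v x x = 0, and D the matrix D i j = d_v (L₁ i) (L₂ j), the quantity min over permutations π of [(1/2)‖(κ•A) P_π − P_π (κ•B)‖_F² + trace(P_πᵀ D)] equals min over π of [κ² · (number of pairs i<j with A i j ≠ B (π i) (π j)) + ∑ i, d_v (L₁ i) (L₂ (π i))]. -/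
open Matrix

def permMat (n : ℕ) (π : Equiv.Perm (Fin n)) : Matrix (Fin n) (Fin n) ℝ :=
  fun i j => if π i = j then 1 else 0

def frobSq (n : ℕ) (M : Matrix (Fin n) (Fin n) ℝ) : ℝ :=
  ∑ i, ∑ j, (M i j) ^ 2

noncomputable def edgeMismatch (n : ℕ) (M N : Matrix (Fin n) (Fin n) ℝ) (τ : Equiv.Perm (Fin n)) : ℕ :=
  (Finset.univ.filter
    (fun p : Fin n × Fin n => p.1 < p.2 ∧ M p.1 p.2 ≠ N (τ p.1) (τ p.2))).card

lemma sq_sub_01 {a b : ℝ} (ha : a = 0 ∨ a = 1) (hb : b = 0 ∨ b = 1) :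
    (a - b) ^ 2 = if a ≠ b then 1 else 0 := by
  rcases ha with h | h <;> rcases hb with h' | h' <;> subst h <;> subst h' <;> norm_num

theorem ged_with_node_labels (n : ℕ) (A B : Matrix (Fin n) (Fin n) ℝ)
    (hA : Aᵀ = A) (hB : Bᵀ = B)
    (hA01 : ∀ i j, A i j = 0 ∨ A i j = 1) (hB01 : ∀ i j, B i j = 0 ∨ B i j = 1)
    (hAdiag : ∀ i, A i i = 0) (hBdiag : ∀ i, B i i = 0)
    (κ : ℝ) {S : Type*} (L₁ L₂ : Fin n → S) (d_v : S → S → ℝ)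
    (hdv : ∀ x, d_v x x = 0)
    (D : Matrix (Fin n) (Fin n) ℝ) (hD : ∀ i j, D i j = d_v (L₁ i) (L₂ j)) :
    (Finset.univ.inf' Finset.univ_nonempty
        (fun π : Equiv.Perm (Fin n) =>
          (1 / 2) * frobSq n ((κ • A) * permMat n π - permMat n π * (κ • B)) +
            Matrix.trace ((permMat n π)ᵀ * D))) =
      Finset.univ.inf' Finset.univ_nonempty
        (fun π : Equiv.Perm (Fin n) =>
          κ ^ 2 * (edgeMismatch n A B π : ℝ) + ∑ i, d_v (L₁ i) (L₂ (π i))) := by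
  have hAsym : ∀ i j, A j i = A i j := fun i j =>
    ((congrFun (congrFun hA j) i : A i j = A j i)).symm
  have hBsym : ∀ i j, B j i = B i j := fun i j =>
    ((congrFun (congrFun hB j) i : B i j = B j i)).symm
  congr 1
  funext π
  -- trace part
  have htr : Matrix.trace ((permMat n π)ᵀ * D) = ∑ i, d_v (L₁ i) (L₂ (π i)) := by
    simp only [Matrix.trace, Matrix.diag, Matrix.mul_apply, Matrix.transpose_apply, permMat,
      ite_mul, one_mul, zero_mul]
    rw [Finset.sum_comm]
    refine Finset.sum_congr rfl fun k _ => ?_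
    rw [Finset.sum_ite_eq Finset.univ (π k) (fun i => D k i)]
    simp [hD]
  -- entrywise formula
  have hentry : ∀ i j, ((κ • A) * permMat n π - permMat n π * (κ • B)) i (π j)
      = κ * (A i j - B (π i) (π j)) := by
    intro i j
    simp only [Matrix.sub_apply, Matrix.mul_apply, Matrix.smul_apply, smul_eq_mul, permMat,
      mul_ite, ite_mul, mul_one, mul_zero, one_mul, zero_mul]
    simp [π.injective.eq_iff, Finset.sum_ite_eq, Finset.sum_ite_eq']
    ring
  -- frobenius part
  have h1 : frobSq n ((κ • A) * permMat n π - permMat n π * (κ • B))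
      = κ ^ 2 * ∑ i, ∑ j, (A i j - B (π i) (π j)) ^ 2 := by
    unfold frobSq
    rw [Finset.mul_sum]
    refine Finset.sum_congr rfl fun i _ => ?_
    rw [Finset.mul_sum, ← Equiv.sum_comp π
      (fun j => ((κ • A) * permMat n π - permMat n π * (κ • B)) i j ^ 2)]
    refine Finset.sum_congr rfl fun j _ => ?_
    rw [hentry i j]
    ring
  -- core combinatorial identity
  have hcore : ∑ i, ∑ j, (A i j - B (π i) (π j)) ^ 2 = 2 * (edgeMismatch n A B π : ℝ) := by
    have hf : ∀ p : Fin n × Fin n, (A p.1 p.2 - B (π p.1) (π p.2)) ^ 2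
        = if A p.1 p.2 ≠ B (π p.1) (π p.2) then (1:ℝ) else 0 :=
      fun p => sq_sub_01 (hA01 p.1 p.2) (hB01 (π p.1) (π p.2))
    set g : Fin n × Fin n → ℝ := fun p => if A p.1 p.2 ≠ B (π p.1) (π p.2) then 1 else 0 with hg
    have hsum : ∑ i, ∑ j, (A i j - B (π i) (π j)) ^ 2 = ∑ p : Fin n × Fin n, g p := by
      rw [Fintype.sum_prod_type]
      exact Finset.sum_congr rfl fun i _ => Finset.sum_congr rfl fun j _ => hf (i, j)
    rw [hsum]
    have hsplit := Finset.sum_filter_add_sum_filter_not Finset.univ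
      (fun p : Fin n × Fin n => p.1 < p.2) g
    have hsplit2 := Finset.sum_filter_add_sum_filter_not
      (Finset.univ.filter (fun p : Fin n × Fin n => ¬ p.1 < p.2))
      (fun p : Fin n × Fin n => p.2 < p.1) g
    -- diagonal part is 0
    have hdiag : ∑ p ∈ ((Finset.univ.filter (fun p : Fin n × Fin n => ¬ p.1 < p.2)).filter
        (fun p : Fin n × Fin n => ¬ p.2 < p.1)), g p = 0 := by
      refine Finset.sum_eq_zero fun p hp => ?_
      simp only [Finset.mem_filter] at hp
      have : p.1 = p.2 := le_antisymm (not_lt.mp hp.2) (not_lt.mp hp.1.2)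
      simp [hg, ← this, hAdiag, hBdiag]
    -- swap part
    have hswap : ∑ p ∈ ((Finset.univ.filter (fun p : Fin n × Fin n => ¬ p.1 < p.2)).filter
        (fun p : Fin n × Fin n => p.2 < p.1)), g p
        = ∑ p ∈ (Finset.univ.filter (fun p : Fin n × Fin n => p.1 < p.2)), g p := by
      refine Finset.sum_nbij' (fun p => Prod.swap p) (fun p => Prod.swap p) ?_ ?_ ?_ ?_ ?_
      · intro p hp
        simp only [Finset.mem_filter] at hp ⊢
        exact ⟨Finset.mem_univ _, hp.2⟩
      · intro p hp
        simp only [Finset.mem_filter] at hp ⊢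
        exact ⟨⟨Finset.mem_univ _, not_lt.mpr hp.2.le⟩, hp.2⟩
      · intro p _; rfl
      · intro p _; rfl
      · intro p _
        simp only [hg, Prod.fst_swap, Prod.snd_swap]
        rw [hAsym p.2 p.1, hBsym (π p.2) (π p.1)]
    -- count
    have hcount : ∑ p ∈ (Finset.univ.filter (fun p : Fin n × Fin n => p.1 < p.2)), g p
        = (edgeMismatch n A B π : ℝ) := by
      rw [hg, Finset.sum_boole, Finset.filter_filter]
      rfl
    rw [← hsplit, ← hsplit2, hdiag, hswap, hcount]
    ring
  rw [htr, h1, hcore]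
  ring
end

section
/- Conversely, if d_v is a metric on labels (in particular d_v x y = 0 implies x = y) and κ ≠ 0, and min over π of [(1/2)‖(κ•A) P_π − P_π (κ•B)‖_F² + trace(P_πᵀ D)] = 0, then there is a permutation π with A P_π = P_π B and L₁ i = L₂ (π i) for all i, i.e., the labeled graphs are isomorphic. -/
open Matrix

theorem iso_of_ged_objective_zero (n : ℕ) (A B : Matrix (Fin n) (Fin n) ℝ)
    (hA : Aᵀ = A) (hB : Bᵀ = B)
    (hA01 : ∀ i j, A i j = 0 ∨ A i j = 1) (hB01 : ∀ i j, B i j = 0 ∨ B i j = 1)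
    (κ : ℝ) (hκ : κ ≠ 0) {S : Type*} (L₁ L₂ : Fin n → S) (d_v : S → S → ℝ)
    (hdvnn : ∀ x y, 0 ≤ d_v x y) (hdv0 : ∀ x y, d_v x y = 0 ↔ x = y)
    (D : Matrix (Fin n) (Fin n) ℝ) (hD : ∀ i j, D i j = d_v (L₁ i) (L₂ j))
    (hmin : Finset.univ.inf' Finset.univ_nonempty
        (fun π : Equiv.Perm (Fin n) =>
          (1 / 2) * frobSq n ((κ • A) * permMat n π - permMat n π * (κ • B)) +
            Matrix.trace ((permMat n π)ᵀ * D)) = 0) :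
    ∃ π : Equiv.Perm (Fin n),
      A * permMat n π = permMat n π * B ∧ ∀ i, L₁ i = L₂ (π i) := by
  obtain ⟨π, -, hπ⟩ := Finset.exists_mem_eq_inf' (Finset.univ_nonempty)
    (fun π : Equiv.Perm (Fin n) =>
      (1 / 2) * frobSq n ((κ • A) * permMat n π - permMat n π * (κ • B)) +
        Matrix.trace ((permMat n π)ᵀ * D))
  rw [hmin] at hπ
  have htr : Matrix.trace ((permMat n π)ᵀ * D) = ∑ k, D k (π k) := by
    simp only [Matrix.trace, Matrix.diag, Matrix.mul_apply, Matrix.transpose_apply, permMat]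
    rw [Finset.sum_comm]
    simp
  have hfrobnn : 0 ≤ frobSq n ((κ • A) * permMat n π - permMat n π * (κ • B)) :=
    Finset.sum_nonneg fun i _ => Finset.sum_nonneg fun j _ => sq_nonneg _
  have htrnn : 0 ≤ Matrix.trace ((permMat n π)ᵀ * D) := by
    rw [htr]
    exact Finset.sum_nonneg fun k _ => (hD k (π k)) ▸ hdvnn _ _
  have hfrob0 : frobSq n ((κ • A) * permMat n π - permMat n π * (κ • B)) = 0 := by
    nlinarith [hπ.symm]
  have htr0 : Matrix.trace ((permMat n π)ᵀ * D) = 0 := by linarith [hπ.symm]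
  refine ⟨π, ?_, ?_⟩
  · have hentry : ∀ i j, ((κ • A) * permMat n π - permMat n π * (κ • B)) i j = 0 := by
      intro i j
      have h1 := (Finset.sum_eq_zero_iff_of_nonneg
        (fun i _ => Finset.sum_nonneg fun j _ => sq_nonneg _)).mp hfrob0 i (Finset.mem_univ i)
      have h2 := (Finset.sum_eq_zero_iff_of_nonneg
        (fun j _ => sq_nonneg _)).mp h1 j (Finset.mem_univ j)
      exact pow_eq_zero_iff (by norm_num) |>.mp h2
    have hmat : (κ • A) * permMat n π = permMat n π * (κ • B) := by
      ext i j
      have := hentry i j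
      simp only [Matrix.sub_apply] at this
      linarith
    rw [Matrix.smul_mul, Matrix.mul_smul] at hmat
    ext i j
    have := congrFun (congrFun hmat i) j
    simp only [Matrix.smul_apply, smul_eq_mul] at this
    exact mul_left_cancel₀ hκ this
  · intro k
    rw [htr] at htr0
    have := (Finset.sum_eq_zero_iff_of_nonneg
      (fun k _ => (hD k (π k)) ▸ hdvnn _ _)).mp htr0 k (Finset.mem_univ k)
    rw [hD] at this
    exact (hdv0 _ _).mp this
end
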